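/- arXiv:1511.08879 — 3 statements merged into one kernel-verified Lean document; each statement's English description precedes it below -/
import Mathlib

section
/- For every nonnegative integer n, the generalized q-factorials are expressed through the q-Gamma function as (2n)!_{q,α} = (1+q)^{2n} Γ_{q²}(α+n+1) Γ_{q²}(n+1) / Γ_{q²}(α+1) and (2n+1)!_{q,α} = (1+q)^{2n+1} Γ_{q²}(α+n+2) Γ_{q²}(n+1) / Γ_{q²}(α+1). -/
open scoped BigOperators
open Real Filter

noncomputable section

/-- q-shifted factorial `(a;q)_n`. -/
def qPoch (a q : ℝ) (n : ℕ) : ℝ := ∏ k ∈ Finset.range n, (1 - a * q ^ k)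

/-- infinite q-shifted factorial `(a;q)_∞`. -/
def qPochInf (a q : ℝ) : ℝ := ∏' k : ℕ, (1 - a * q ^ k)

/-- q-number `⟦x⟧_q = (1-q^x)/(1-q)`. -/
def qNumber (q x : ℝ) : ℝ := (1 - q ^ x) / (1 - q)

/-- generalized q-integer `⟦n⟧_{q,α}`: equals `⟦n⟧_q` for even `n` and
`⟦n+2α+1⟧_q` for odd `n` (so `⟦2m+1⟧_{q,α} = ⟦2m+2α+2⟧_q`). -/
def qNumAlpha (q α : ℝ) (n : ℕ) : ℝ :=
  if n % 2 = 0 then qNumber q n else qNumber q (n + 2 * α + 1)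

/-- generalized q-factorial `n!_{q,α}`. -/
def qFactAlpha (q α : ℝ) (n : ℕ) : ℝ := ∏ k ∈ Finset.range n, qNumAlpha q α (k + 1)

/-- generalized q-shifted factorial `(q;q)_{n,α} = (1-q)^n n!_{q,α}`. -/
def qPochAlpha (q α : ℝ) (n : ℕ) : ℝ := (1 - q) ^ n * qFactAlpha q α n

/-- generalized discrete q-Hermite II polynomials `h̃_{n,α}(x;q)`. -/
def hTilde (q α : ℝ) (n : ℕ) (x : ℝ) : ℝ :=
  qPoch q q n * ∑ k ∈ Finset.range (n / 2 + 1),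
    (-1 : ℝ) ^ k * q ^ ((k * (2 * k + 1) : ℤ) - (2 * n * k : ℤ)) * x ^ (n - 2 * k) /
      (qPoch (q ^ 2) (q ^ 2) k * qPochAlpha q α (n - 2 * k))

/-- the weight `ω_α(x;q) = e_{q²}(-q^{-2α-1}x²) = 1/∏_{k≥0}(1+q^{-2α-1}x²q^{2k})`. -/
def omegaAlpha (q α x : ℝ) : ℝ :=
  (∏' k : ℕ, (1 + q ^ (-(2 * α + 1)) * x ^ 2 * q ^ (2 * k)))⁻¹

/-- normalization constant `c_α`. -/
def cAlpha (q α : ℝ) : ℝ :=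
  Real.sqrt (qPochInf (-q ^ (-(2 * α + 1))) (q ^ 2) * qPochInf (-q ^ (2 * α + 3)) (q ^ 2) *
      qPochInf (q ^ (2 * α + 2)) (q ^ 2) /
    (2 * (1 - q) *
      (qPochInf (-q) (q ^ 2) * qPochInf (-q) (q ^ 2) * qPochInf (q ^ 2) (q ^ 2))))

/-- normalization constant `d_{n,α} = c_α q^{n²/2} (q;q)_{n,α}^{1/2} / (q;q)_n`. -/
def dAlpha (q α : ℝ) (n : ℕ) : ℝ :=
  cAlpha q α * q ^ (((n : ℝ) ^ 2) / 2) * Real.sqrt (qPochAlpha q α n) / qPoch q q n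

/-- the (q,α)-deformed Hermite functions `φ_n^α(x;q)`. -/
def phiQ (q α : ℝ) (n : ℕ) (x : ℝ) : ℝ :=
  dAlpha q α n * Real.sqrt (omegaAlpha q α x) * hTilde q α n x

/-- parity indicator `θ(n)`: 1 if `n` is odd, 0 if `n` is even. -/
def theta (n : ℕ) : ℝ := if n % 2 = 1 then 1 else 0

/-- the q-Gamma function `Γ_q(z) = (q;q)_∞ / (q^z;q)_∞ · (1-q)^{1-z}`. -/
def qGammaF (q z : ℝ) : ℝ := qPochInf q q / qPochInf (q ^ z) q * (1 - q) ^ (1 - z)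

/-- Rosenblum generalized factorial `γ_ν(n)`. -/
def gammaGen (ν : ℝ) (n : ℕ) : ℝ :=
  2 ^ n * (Nat.factorial (n / 2) : ℝ) *
    Real.Gamma (ν + (((n + 1) / 2 : ℕ) : ℝ) + 1 / 2) / Real.Gamma (ν + 1 / 2)

/-- generalized Hermite polynomials `H_n^ν(x)`. -/
def HGen (ν : ℝ) (n : ℕ) (x : ℝ) : ℝ :=
  (Nat.factorial n : ℝ) * ∑ k ∈ Finset.range (n / 2 + 1),
    (-1 : ℝ) ^ k * (2 * x) ^ (n - 2 * k) / ((Nat.factorial k : ℝ) * gammaGen ν (n - 2 * k))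

/-- Rosenblum generalized Hermite functions `φ_n^ν(x)`. -/
def phiGen (ν : ℝ) (n : ℕ) (x : ℝ) : ℝ :=
  Real.sqrt (gammaGen ν n / Real.Gamma (ν + 1 / 2)) * Real.exp (-x ^ 2 / 2) *
    HGen ν n x / ((2 : ℝ) ^ ((n : ℝ) / 2) * (Nat.factorial n : ℝ))

/-- symmetric q-number `[x]_s = (s^x - s^{-x})/(s - s^{-1})`. -/
def qNumSym (s x : ℝ) : ℝ := (s ^ x - s ^ (-x)) / (s - s⁻¹)

/-- Euler q-exponential `e_q(z) = Σ z^k/(q;q)_k`. -/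
def eExp (q z : ℝ) : ℝ := ∑' k : ℕ, z ^ k / qPoch q q k

/-- generalized q-exponential `E_{q,α}(z) = Σ q^{k(k-1)/2} z^k/(q;q)_{k,α}`. -/
def bigEAlpha (q α z : ℝ) : ℝ := ∑' k : ℕ, q ^ (k * (k - 1) / 2) * z ^ k / qPochAlpha q α k

/-- generalized q-exponential `e_{q,α}(z) = Σ z^k/(q;q)_{k,α}`. -/
def eExpAlpha (q α z : ℝ) : ℝ := ∑' k : ℕ, z ^ k / qPochAlpha q α k

/-
The q-Gamma function satisfies `Γ_Q(z + 1) = ⟦z⟧_Q Γ_Q(z)`, because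
`(Q^z; Q)_∞ = (1 - Q^z) (Q^{z+1}; Q)_∞`; iterating, `Γ_Q(z + n) / Γ_Q(z) = ∏_{k<n} ⟦z + k⟧_Q`.
Since `⟦2z⟧_q = (1 + q) ⟦z⟧_{q²}`, the odd-indexed factors `⟦2k + 2α + 2⟧_q` of `(2n)!_{q,α}`
contribute `(1 + q)^n Γ_{q²}(α + n + 1) / Γ_{q²}(α + 1)` and the even-indexed factors `⟦2k + 2⟧_q`
contribute `(1 + q)^n Γ_{q²}(n + 1)`.
-/

lemma summable_norm_mul_geometric {a q : ℝ} (hq : |q| < 1) :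
    Summable fun k : ℕ => ‖a * q ^ k‖ := by
  simpa [norm_mul, norm_pow] using
    (summable_geometric_of_lt_one (abs_nonneg q) hq).mul_left |a|

lemma multipliable_qPochInf (a : ℝ) {q : ℝ} (hq : |q| < 1) :
    Multipliable fun k : ℕ => 1 - a * q ^ k := by
  simp only [sub_eq_add_neg]
  exact Real.multipliable_one_add_of_summable (summable_norm_mul_geometric (a := a) hq).of_norm.neg

lemma qPochInf_ne_zero {a q : ℝ} (ha : |a| < 1) (hq : |q| < 1) : qPochInf a q ≠ 0 := by
  have hfactor (k : ℕ) : 1 + -(a * q ^ k) ≠ 0 := by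
    have : |a * q ^ k| < 1 := by
      rw [abs_mul, abs_pow]
      exact mul_lt_one_of_nonneg_of_lt_one_left (abs_nonneg a) ha
        (pow_le_one₀ (abs_nonneg q) hq.le)
    linarith [(abs_lt.mp this).2]
  simp only [qPochInf, sub_eq_add_neg]
  have hsum := summable_norm_mul_geometric (a := a) hq
  exact tprod_one_add_ne_zero_of_summable hfactor (by simpa only [norm_neg] using hsum)

lemma qPochInf_eq_one_sub_mul (a : ℝ) {q : ℝ} (hq : |q| < 1) :
    qPochInf a q = (1 - a) * qPochInf (a * q) q := by
  have hshift : Multipliable fun k : ℕ => 1 - a * q ^ (k + 1) := by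
    simpa only [pow_succ, mul_assoc, mul_comm q] using multipliable_qPochInf (a * q) hq
  rw [qPochInf, tprod_eq_zero_mul' (f := fun k => 1 - a * q ^ k) hshift, qPochInf]
  simp only [pow_zero, mul_one, pow_succ, mul_assoc, mul_comm q]

lemma qNumber_two_mul {q : ℝ} (hq : 0 ≤ q) (z : ℝ) :
    qNumber q (2 * z) = (1 + q) * qNumber (q ^ 2) z := by
  have h1q : 1 + q ≠ 0 := by linarith
  rw [qNumber, qNumber, Real.rpow_mul hq, Real.rpow_two,
    show 1 - q ^ 2 = (1 + q) * (1 - q) by ring, ← mul_div_assoc, mul_div_mul_left _ _ h1q]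

section qGamma

variable {Q : ℝ}

lemma qGammaF_one (hQ : |Q| < 1) : qGammaF Q 1 = 1 := by
  rw [qGammaF, Real.rpow_one, sub_self, Real.rpow_zero, div_self (qPochInf_ne_zero hQ hQ),
    one_mul]

variable (hQ0 : 0 < Q) (hQ1 : Q < 1)
include hQ0 hQ1

lemma qGammaF_ne_zero {z : ℝ} (hz : 0 < z) : qGammaF Q z ≠ 0 := by
  have habs : |Q| < 1 := by rwa [abs_of_pos hQ0]
  have hQz : |Q ^ z| < 1 := by
    rw [abs_of_pos (Real.rpow_pos_of_pos hQ0 z)]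
    exact Real.rpow_lt_one hQ0.le hQ1 hz
  exact mul_ne_zero (div_ne_zero (qPochInf_ne_zero habs habs) (qPochInf_ne_zero hQz habs))
    (Real.rpow_pos_of_pos (by linarith) _).ne'

lemma qGammaF_add_one {z : ℝ} (hz : 0 < z) :
    qGammaF Q (z + 1) = qNumber Q z * qGammaF Q z := by
  have habs : |Q| < 1 := by rwa [abs_of_pos hQ0]
  have hQz1 : Q ^ z < 1 := Real.rpow_lt_one hQ0.le hQ1 hz
  have hrpow : Q ^ (z + 1) = Q ^ z * Q := by rw [Real.rpow_add hQ0, Real.rpow_one]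
  have htail : qPochInf (Q ^ z * Q) Q ≠ 0 := by
    refine qPochInf_ne_zero ?_ habs
    rw [← hrpow, abs_of_pos (Real.rpow_pos_of_pos hQ0 _)]
    exact Real.rpow_lt_one hQ0.le hQ1 (by linarith)
  have hexp : (1 - Q) ^ (1 - (z + 1)) = (1 - Q) ^ (1 - z) / (1 - Q) := by
    rw [show 1 - (z + 1) = (1 - z) - 1 by ring, Real.rpow_sub (by linarith), Real.rpow_one]
  have h1Qz : 1 - Q ^ z ≠ 0 := by linarith
  have h1Q : 1 - Q ≠ 0 := by linarith
  rw [qGammaF, qGammaF, hrpow, qPochInf_eq_one_sub_mul (Q ^ z) habs, hexp, qNumber]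
  field_simp

lemma qGammaF_add_nat {z : ℝ} (hz : 0 < z) (n : ℕ) :
    qGammaF Q (z + n) = (∏ k ∈ Finset.range n, qNumber Q (z + k)) * qGammaF Q z := by
  induction n with
  | zero => simp
  | succ n ih =>
    rw [Nat.cast_succ, ← add_assoc, qGammaF_add_one hQ0 hQ1 (by positivity), ih,
      Finset.prod_range_succ]
    ring

end qGamma

lemma qNumAlpha_two_mul_add_one (q α : ℝ) (m : ℕ) :
    qNumAlpha q α (2 * m + 1) = qNumber q (2 * (α + 1 + m)) := by
  rw [qNumAlpha, if_neg (by omega)]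
  push_cast
  ring_nf

lemma qNumAlpha_two_mul_add_two (q α : ℝ) (m : ℕ) :
    qNumAlpha q α (2 * m + 2) = qNumber q (2 * (1 + m)) := by
  rw [qNumAlpha, if_pos (by omega)]
  push_cast
  ring_nf

lemma qFactAlpha_succ (q α : ℝ) (m : ℕ) :
    qFactAlpha q α (m + 1) = qFactAlpha q α m * qNumAlpha q α (m + 1) :=
  Finset.prod_range_succ _ _

lemma qFactAlpha_two_mul (q α : ℝ) (n : ℕ) :
    qFactAlpha q α (2 * n) =
      ∏ k ∈ Finset.range n, qNumAlpha q α (2 * k + 1) * qNumAlpha q α (2 * k + 2) := by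
  induction n with
  | zero => simp [qFactAlpha]
  | succ n ih =>
    rw [show 2 * (n + 1) = 2 * n + 1 + 1 by ring, qFactAlpha_succ, qFactAlpha_succ, ih,
      Finset.prod_range_succ]
    ring

lemma qFactAlpha_two_mul_eq_prod_qNumber {q : ℝ} (hq : 0 ≤ q) (α : ℝ) (n : ℕ) :
    qFactAlpha q α (2 * n) =
      (1 + q) ^ (2 * n) * (∏ k ∈ Finset.range n, qNumber (q ^ 2) (α + 1 + k)) *
        ∏ k ∈ Finset.range n, qNumber (q ^ 2) (1 + k) := by
  simp only [qFactAlpha_two_mul, qNumAlpha_two_mul_add_one, qNumAlpha_two_mul_add_two,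
    qNumber_two_mul hq, Finset.prod_mul_distrib, Finset.prod_const, Finset.card_range]
  ring

/-- generalized q-factorials via the q-Gamma function. -/
theorem stmt_1 (q α : ℝ) (hq0 : 0 < q) (hq1 : q < 1) (hα : -1 < α) (n : ℕ) :
    qFactAlpha q α (2 * n) =
      (1 + q) ^ (2 * n) * qGammaF (q ^ 2) (α + n + 1) * qGammaF (q ^ 2) (n + 1) /
        qGammaF (q ^ 2) (α + 1) ∧
    qFactAlpha q α (2 * n + 1) =
      (1 + q) ^ (2 * n + 1) * qGammaF (q ^ 2) (α + n + 2) * qGammaF (q ^ 2) (n + 1) /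
        qGammaF (q ^ 2) (α + 1) := by
  have hQ0 : 0 < q ^ 2 := by positivity
  have hQ1 : q ^ 2 < 1 := by nlinarith
  have hα1 : 0 < α + 1 := by linarith
  have hΓα := qGammaF_add_nat hQ0 hQ1 hα1 n
  have hΓ1 := qGammaF_add_nat hQ0 hQ1 one_pos n
  rw [qGammaF_one (by rwa [abs_of_pos hQ0]), mul_one] at hΓ1
  have hne := qGammaF_ne_zero hQ0 hQ1 hα1
  have heven := qFactAlpha_two_mul_eq_prod_qNumber hq0.le α n
  rw [show α + n + 1 = α + 1 + n by ring, add_comm (n : ℝ) 1, hΓ1, hΓα]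
  refine ⟨by rw [heven]; field_simp, ?_⟩
  rw [show α + n + 2 = α + 1 + n + 1 by ring, qGammaF_add_one hQ0 hQ1 (by positivity), hΓα,
    qFactAlpha_succ, heven, qNumAlpha_two_mul_add_one, qNumber_two_mul hq0.le]
  field_simp
  ring
end
end

section
/- The annihilation operator acts on the (q,α)-deformed Hermite functions by lowering the index: for every integer n ≥ 1 and every real x ≠ 0, (q^{1/2}/(√(1−q)·x)) · [ √(1+q^{−2α−3}x²) · φ_n^α(q^{−1}x;q) − q^{(2α+1)θ(n)} · φ_n^α(x;q) ] = √(⟦n⟧_{q,α}) · φ_{n−1}^α(x;q), where θ(n)=1 if n is odd and θ(n)=0 if n is even; moreover for n = 0 and every real x ≠ 0, √(1+q^{−2α−3}x²) · φ_0^α(q^{−1}x;q) − φ_0^α(x;q) = 0. -/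
open scoped BigOperators
open Real Filter

noncomputable section

/-!
Peeling the first factor off the infinite product gives
`ω_α(x/q) = ω_α(x) / (1 + q^{-2α-3} x²)`, so the square root in the operator cancels and the
identity becomes one for `h̃`. In the `k`-th summand of `h̃_n`, with `j = n - 2k`,
`q^{-j} - q^{(2α+1)θ(n)} = q^{-j} (1 - q) ⟦j⟧_{q,α}` because `θ(n) = θ(j)`; this cancels the
last factor of `(q;q)_{j,α}` and yields
`h̃_n(x/q) - q^{(2α+1)θ(n)} h̃_n(x) = q^{-n} (1 - q^n) x h̃_{n-1}(x)`.
The ratio `d_{n,α} / d_{n-1,α}` turns this coefficient into `√⟦n⟧_{q,α}`.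
-/

theorem tprod_one_add_mul_pow {r : ℝ} (hr : |r| < 1) (c : ℝ) :
    ∏' k : ℕ, (1 + c * r ^ k) = (1 + c) * ∏' k : ℕ, (1 + c * r * r ^ k) := by
  have hmul : Multipliable fun k : ℕ => 1 + c * r * r ^ k :=
    Real.multipliable_one_add_of_summable ((summable_geometric_of_abs_lt_one hr).mul_left _)
  rw [tprod_eq_zero_mul' (hmul.congr fun k => by ring)]
  simp only [pow_zero, mul_one, pow_succ]
  congr 1
  exact tprod_congr fun k => by ring

theorem qPoch_succ (a r : ℝ) (n : ℕ) : qPoch a r (n + 1) = qPoch a r n * (1 - a * r ^ n) :=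
  Finset.prod_range_succ _ _

theorem qPoch_pos {a r : ℝ} (ha0 : 0 ≤ a) (ha1 : a < 1) (hr0 : 0 ≤ r) (hr1 : r ≤ 1) (n : ℕ) :
    0 < qPoch a r n :=
  Finset.prod_pos fun k _ => by
    nlinarith [mul_le_of_le_one_right ha0 (pow_le_one₀ hr0 hr1 : r ^ k ≤ 1)]

theorem qPochAlpha_succ (q α : ℝ) (n : ℕ) :
    qPochAlpha q α (n + 1) = qPochAlpha q α n * ((1 - q) * qNumAlpha q α (n + 1)) := by
  simp only [qPochAlpha, qFactAlpha, Finset.prod_range_succ, pow_succ]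
  ring

theorem theta_two_mul_add (k n : ℕ) : theta (2 * k + n) = theta n := by
  simp [theta, Nat.add_mod]

section Positivity

variable {q α : ℝ} (hq0 : 0 < q) (hq1 : q < 1)
include hq0 hq1

theorem qNumAlpha_pos (hα : -1 < α) {n : ℕ} (hn : 1 ≤ n) : 0 < qNumAlpha q α n := by
  have hn' : (1 : ℝ) ≤ n := by exact_mod_cast hn
  unfold qNumAlpha qNumber
  split_ifs <;>
    exact div_pos (sub_pos.2 (Real.rpow_lt_one hq0.le hq1 (by linarith))) (sub_pos.2 hq1)

theorem qPochAlpha_pos (hα : -1 < α) (n : ℕ) : 0 < qPochAlpha q α n :=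
  mul_pos (pow_pos (sub_pos.2 hq1) n)
    (Finset.prod_pos fun k _ => qNumAlpha_pos hq0 hq1 hα (Nat.le_add_left 1 k))

end Positivity

theorem one_sub_rpow_theta_mul_pow {q : ℝ} (α : ℝ) (hq0 : 0 < q) (hq1 : q ≠ 1) (n : ℕ) :
    1 - q ^ ((2 * α + 1) * theta n) * q ^ n = (1 - q) * qNumAlpha q α n := by
  have h1q : 1 - q ≠ 0 := sub_ne_zero.2 hq1.symm
  unfold theta qNumAlpha qNumber
  rcases Nat.mod_two_eq_zero_or_one n with h | h
  · simp [h, mul_div_cancel₀ _ h1q]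
  · rw [if_pos h, if_neg (by omega), mul_one, mul_div_cancel₀ _ h1q, ← Real.rpow_natCast,
      ← Real.rpow_add hq0]
    ring_nf

theorem omegaAlpha_div {q : ℝ} (α : ℝ) (hq0 : 0 < q) (hq1 : q < 1) (x : ℝ) :
    omegaAlpha q α (x / q) = omegaAlpha q α x / (1 + q ^ (-(2 * α + 3)) * x ^ 2) := by
  have hq2 : |q ^ 2| < 1 := by
    rw [abs_of_pos (by positivity)]
    nlinarith
  have hpow : q ^ (-(2 * α + 1)) = q ^ (-(2 * α + 3)) * q ^ 2 := by
    rw [← Real.rpow_add_natCast hq0.ne']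
    norm_num
    ring_nf
  have hdiv : ∀ k : ℕ, 1 + q ^ (-(2 * α + 1)) * (x / q) ^ 2 * q ^ (2 * k) =
      1 + q ^ (-(2 * α + 3)) * x ^ 2 * (q ^ 2) ^ k :=
    fun k => by rw [hpow, pow_mul]; field_simp
  have hself : ∀ k : ℕ, 1 + q ^ (-(2 * α + 1)) * x ^ 2 * q ^ (2 * k) =
      1 + q ^ (-(2 * α + 3)) * x ^ 2 * q ^ 2 * (q ^ 2) ^ k :=
    fun k => by rw [hpow, pow_mul]; ring
  rw [omegaAlpha, omegaAlpha, tprod_congr hdiv, tprod_congr hself, tprod_one_add_mul_pow hq2,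
    mul_inv, div_eq_mul_inv, mul_comm]

theorem sqrt_one_add_mul_sqrt_omegaAlpha_div {q : ℝ} (α : ℝ) (hq0 : 0 < q) (hq1 : q < 1)
    (x : ℝ) :
    √(1 + q ^ (-(2 * α + 3)) * x ^ 2) * √(omegaAlpha q α (x / q)) = √(omegaAlpha q α x) := by
  have hpos : 0 < 1 + q ^ (-(2 * α + 3)) * x ^ 2 := by positivity
  rw [omegaAlpha_div α hq0 hq1, Real.sqrt_div' _ hpos.le,
    mul_div_cancel₀ _ (Real.sqrt_pos.2 hpos).ne']

def hTildeTerm (q α : ℝ) (n k : ℕ) (x : ℝ) : ℝ :=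
  (-1 : ℝ) ^ k * q ^ ((k * (2 * k + 1) : ℤ) - (2 * n * k : ℤ)) * x ^ (n - 2 * k) /
    (qPoch (q ^ 2) (q ^ 2) k * qPochAlpha q α (n - 2 * k))

theorem hTilde_eq_sum (q α : ℝ) (n : ℕ) (x : ℝ) :
    hTilde q α n x = qPoch q q n * ∑ k ∈ Finset.range (n / 2 + 1), hTildeTerm q α n k x :=
  rfl

theorem hTilde_zero (q α x : ℝ) : hTilde q α 0 x = 1 := by
  simp [hTilde, qPoch, qPochAlpha, qFactAlpha]

theorem hTildeTerm_two_mul_self (q α : ℝ) (k : ℕ) (x y : ℝ) :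
    hTildeTerm q α (2 * k) k x = hTildeTerm q α (2 * k) k y := by
  simp [hTildeTerm]

section Recurrence

variable {q α : ℝ} (hq0 : 0 < q) (hq1 : q < 1) (hα : -1 < α)
include hq0 hq1 hα

theorem hTildeTerm_succ_div_sub {m k : ℕ} (hk : 2 * k ≤ m) (x : ℝ) :
    hTildeTerm q α (m + 1) k (x / q)
        - q ^ ((2 * α + 1) * theta (m + 1)) * hTildeTerm q α (m + 1) k x
      = q ^ (-((m + 1 : ℕ) : ℤ)) * x * hTildeTerm q α m k x := by
  obtain ⟨p, rfl⟩ := Nat.exists_eq_add_of_le hk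
  have hkey := one_sub_rpow_theta_mul_pow α hq0 hq1.ne (p + 1)
  have hD : qPoch (q ^ 2) (q ^ 2) k ≠ 0 :=
    (qPoch_pos (by positivity) (by nlinarith) (by positivity) (by nlinarith) k).ne'
  have hP : qPochAlpha q α p ≠ 0 := (qPochAlpha_pos hq0 hq1 hα p).ne'
  have hN : (1 - q) * qNumAlpha q α (p + 1) ≠ 0 :=
    (mul_pos (sub_pos.2 hq1) (qNumAlpha_pos hq0 hq1 hα (Nat.le_add_left 1 p))).ne'
  rw [add_assoc, theta_two_mul_add]
  unfold hTildeTerm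
  rw [Nat.add_sub_cancel_left, Nat.add_sub_cancel_left, qPochAlpha_succ]
  push_cast
  have hexp : q ^ ((k : ℤ) * (2 * k + 1) - 2 * (2 * k + (p + 1)) * k)
      = q ^ ((k : ℤ) * (2 * k + 1) - 2 * (2 * k + p) * k) / q ^ (2 * k) := by
    rw [← zpow_natCast q (2 * k), ← zpow_sub₀ hq0.ne']
    push_cast
    ring_nf
  have hneg : q ^ (-(2 * (k : ℤ) + (p + 1))) = (q ^ (2 * k) * q ^ (p + 1))⁻¹ := by
    rw [← pow_add, zpow_neg, ← zpow_natCast]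
    push_cast
    ring_nf
  rw [hexp, hneg, div_pow]
  set N := (1 - q) * qNumAlpha q α (p + 1)
  field_simp
  linear_combination (x * x ^ p) * hkey

theorem hTilde_succ_div_sub (m : ℕ) (x : ℝ) :
    hTilde q α (m + 1) (x / q) - q ^ ((2 * α + 1) * theta (m + 1)) * hTilde q α (m + 1) x
      = q ^ (-((m + 1 : ℕ) : ℤ)) * (1 - q ^ (m + 1)) * x * hTilde q α m x := by
  set Q := q ^ ((2 * α + 1) * theta (m + 1))
  have htop : ∀ k ∈ Finset.range ((m + 1) / 2 + 1), k ∉ Finset.range (m / 2 + 1) →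
      hTildeTerm q α (m + 1) k (x / q) - Q * hTildeTerm q α (m + 1) k x = 0 := by
    intro k hk hk'
    simp only [Finset.mem_range] at hk hk'
    have hm : m + 1 = 2 * k := by omega
    have hQ : Q = 1 := by simp [Q, hm, theta]
    rw [hm, hQ, one_mul, hTildeTerm_two_mul_self q α k _ x, sub_self]
  have hsum : ∑ k ∈ Finset.range ((m + 1) / 2 + 1),
      (hTildeTerm q α (m + 1) k (x / q) - Q * hTildeTerm q α (m + 1) k x)
        = q ^ (-((m + 1 : ℕ) : ℤ)) * x *
          ∑ k ∈ Finset.range (m / 2 + 1), hTildeTerm q α m k x := by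
    rw [← Finset.sum_subset (Finset.range_subset_range.2 (by omega)) htop, Finset.mul_sum]
    refine Finset.sum_congr rfl fun k hk => ?_
    exact hTildeTerm_succ_div_sub hq0 hq1 hα (by simp at hk; omega) x
  rw [Finset.sum_sub_distrib, ← Finset.mul_sum] at hsum
  rw [hTilde_eq_sum, hTilde_eq_sum, hTilde_eq_sum, qPoch_succ, ← pow_succ']
  linear_combination (qPoch q q m * (1 - q ^ (m + 1))) * hsum

end Recurrence

theorem sqrt_mul_dAlpha_succ {q α : ℝ} (hq0 : 0 < q) (hq1 : q < 1) (hα : -1 < α) (m : ℕ) :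
    √q * (q ^ (-((m + 1 : ℕ) : ℤ)) * (1 - q ^ (m + 1))) * dAlpha q α (m + 1)
      = √(1 - q) * √(qNumAlpha q α (m + 1)) * dAlpha q α m := by
  have h1qm : 1 - q ^ (m + 1) ≠ 0 := (sub_pos.2 (pow_lt_one₀ hq0.le hq1 (by omega))).ne'
  have hqPoch : qPoch q q m ≠ 0 := (qPoch_pos hq0.le hq1 hq0.le hq1.le m).ne'
  have hpow : √q * q ^ (-((m + 1 : ℕ) : ℤ)) * q ^ (((m + 1 : ℕ) : ℝ) ^ 2 / 2)
      = q ^ ((m : ℝ) ^ 2 / 2) := by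
    rw [Real.sqrt_eq_rpow, ← Real.rpow_intCast, ← Real.rpow_add hq0, ← Real.rpow_add hq0]
    push_cast
    ring_nf
  unfold dAlpha
  rw [qPochAlpha_succ, qPoch_succ, ← pow_succ', Real.sqrt_mul (qPochAlpha_pos hq0 hq1 hα m).le,
    Real.sqrt_mul (sub_pos.2 hq1).le]
  field_simp
  linear_combination
    cAlpha q α * √(qPochAlpha q α m) * √(1 - q) * √(qNumAlpha q α (m + 1)) * hpow

theorem sqrt_one_add_mul_phiQ_div {q : ℝ} (α : ℝ) (hq0 : 0 < q) (hq1 : q < 1) (n : ℕ) (x : ℝ) :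
    √(1 + q ^ (-(2 * α + 3)) * x ^ 2) * phiQ q α n (x / q)
      = dAlpha q α n * √(omegaAlpha q α x) * hTilde q α n (x / q) := by
  rw [phiQ, ← sqrt_one_add_mul_sqrt_omegaAlpha_div α hq0 hq1 x]
  ring

/-- the annihilation operator lowers the index of the deformed Hermite
functions, and kills the ground state. -/
theorem stmt_5 (q α : ℝ) (hq0 : 0 < q) (hq1 : q < 1) (hα : -1 < α) :
    (∀ n : ℕ, 1 ≤ n → ∀ x : ℝ, x ≠ 0 →
      Real.sqrt q / (Real.sqrt (1 - q) * x) *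
        (Real.sqrt (1 + q ^ (-(2 * α + 3)) * x ^ 2) * phiQ q α n (x / q) -
          q ^ ((2 * α + 1) * theta n) * phiQ q α n x) =
      Real.sqrt (qNumAlpha q α n) * phiQ q α (n - 1) x) ∧
    (∀ x : ℝ, x ≠ 0 →
      Real.sqrt (1 + q ^ (-(2 * α + 3)) * x ^ 2) * phiQ q α 0 (x / q) - phiQ q α 0 x = 0) := by
  refine ⟨fun n hn x hx => ?_, fun x _ => ?_⟩
  · obtain ⟨m, rfl⟩ := Nat.exists_eq_add_of_le' hn
    have hrec := hTilde_succ_div_sub hq0 hq1 hα m x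
    have hd := sqrt_mul_dAlpha_succ hq0 hq1 hα m
    have hs : √(1 - q) ≠ 0 := (Real.sqrt_pos.2 (sub_pos.2 hq1)).ne'
    rw [sqrt_one_add_mul_phiQ_div α hq0 hq1, phiQ, phiQ, Nat.add_sub_cancel,
      div_mul_eq_mul_div, div_eq_iff (mul_ne_zero hs hx)]
    linear_combination (√q * dAlpha q α (m + 1) * √(omegaAlpha q α x)) * hrec
      + (x * √(omegaAlpha q α x) * hTilde q α m x) * hd
  · rw [sqrt_one_add_mul_phiQ_div α hq0 hq1, phiQ, hTilde_zero, hTilde_zero, mul_one, sub_self]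
end
end

section
/- For every nonnegative integer n, real α>−1 and real x, lim_{q→1⁻} h̃_{n,α}(√(1−q²)·x ; q) / (1−q²)^{n/2} = H_n^{α+1/2}(x) / 2^n. -/
open scoped BigOperators
open Real Filter

noncomputable section

/-!
Write `(q;q)_n = (1-q)^n [n]_q!` and `(q²;q²)_k = (1-q²)^k [k]_{q²}!`. After the substitution
`x ↦ √(1-q²) x` every power of `1 - q` cancels from the `k`-th term of
`h̃_{n,α}(√(1-q²) x; q) / (1-q²)^{n/2}`, leaving a factor `(1+q)^{-2k}`, q-factorials and the
generalized q-factorial `(n-2k)!_{q,α}`. As `q → 1⁻` these tend to `4^{-k}`, `n!`, `k!` and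
`∏_{j ≤ n-2k} (j + θ(j)(2α+1))`, and that product is Rosenblum's `γ_{α+1/2}(n-2k)`.
-/

open Topology

def qFactorial (q : ℝ) (n : ℕ) : ℝ := ∏ j ∈ Finset.range n, ∑ i ∈ Finset.range (j + 1), q ^ i

lemma qPoch_self_eq (q : ℝ) (n : ℕ) : qPoch q q n = (1 - q) ^ n * qFactorial q n := by
  have h := Finset.pow_card_mul_prod (s := Finset.range n) (b := 1 - q)
    (f := fun j => ∑ i ∈ Finset.range (j + 1), q ^ i)
  rw [Finset.card_range] at h
  rw [qPoch, qFactorial, h]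
  refine Finset.prod_congr rfl fun j _ => ?_
  rw [← pow_succ']
  linear_combination geom_sum_mul q (j + 1)

lemma continuous_qFactorial (n : ℕ) : Continuous fun q => qFactorial q n := by
  unfold qFactorial; fun_prop

lemma qFactorial_one (n : ℕ) : qFactorial 1 n = n.factorial := by
  simp [qFactorial, ← Finset.prod_range_add_one_eq_factorial]

lemma qFactorial_pos {q : ℝ} (hq : 0 < q) (n : ℕ) : 0 < qFactorial q n :=
  Finset.prod_pos fun _ _ =>
    Finset.sum_pos (fun i _ => pow_pos hq i) Finset.nonempty_range_add_one

lemma tendsto_qNumber (r : ℝ) : Tendsto (fun q => qNumber q r) (𝓝[≠] 1) (𝓝 r) := by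
  have h := hasDerivAt_iff_tendsto_slope.mp
    (by simpa using Real.hasDerivAt_rpow_const (x := 1) (p := r) (Or.inl one_ne_zero))
  refine h.congr fun q => ?_
  rw [slope_def_field, qNumber, Real.one_rpow, ← neg_div_neg_eq]
  ring_nf

-- `⟦j⟧_{1,α}`, the value of `qNumAlpha q α j` in the limit `q → 1`.
def numAlpha (α : ℝ) (j : ℕ) : ℝ := if j % 2 = 0 then j else j + 2 * α + 1

lemma tendsto_qNumAlpha (α : ℝ) (j : ℕ) :
    Tendsto (fun q => qNumAlpha q α j) (𝓝[≠] 1) (𝓝 (numAlpha α j)) := by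
  unfold qNumAlpha numAlpha
  split_ifs
  · exact tendsto_qNumber j
  · exact tendsto_qNumber (j + 2 * α + 1)

lemma qNumAlpha_pos_s14 {q α : ℝ} (hq : q ∈ Set.Ioo 0 1) (hα : -1 < α) (j : ℕ) :
    0 < qNumAlpha q α (j + 1) := by
  have hpos : ∀ r : ℝ, 0 < r → 0 < qNumber q r := fun r hr =>
    div_pos (sub_pos.mpr (Real.rpow_lt_one hq.1.le hq.2 hr)) (sub_pos.mpr hq.2)
  have hj : (0 : ℝ) ≤ j := j.cast_nonneg
  unfold qNumAlpha
  split_ifs <;> exact hpos _ (by push_cast; linarith)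

lemma qFactAlpha_pos {q α : ℝ} (hq : q ∈ Set.Ioo 0 1) (hα : -1 < α) (m : ℕ) :
    0 < qFactAlpha q α m :=
  Finset.prod_pos fun j _ => qNumAlpha_pos_s14 hq hα j

lemma gammaGen_add_half_succ {α : ℝ} (hα : -1 < α) (m : ℕ) :
    gammaGen (α + 1 / 2) (m + 1) = numAlpha α (m + 1) * gammaGen (α + 1 / 2) m := by
  have hΓ (t : ℕ) : Real.Gamma (α + 1 / 2 + (t + 1 : ℕ) + 1 / 2) =
      (α + 1 + t) * Real.Gamma (α + 1 / 2 + t + 1 / 2) := by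
    have ht : 0 < α + 1 + t := by have := t.cast_nonneg (α := ℝ); linarith
    rw [show α + 1 / 2 + ((t + 1 : ℕ) : ℝ) + 1 / 2 = α + 1 + t + 1 by push_cast; ring,
      Real.Gamma_add_one ht.ne', show α + 1 / 2 + (t : ℝ) + 1 / 2 = α + 1 + t by ring]
  obtain ⟨t, rfl | rfl⟩ := Nat.even_or_odd' m
  · have h₁ : (2 * t + 1 + 1) / 2 = t + 1 := by omega
    have h₂ : (2 * t + 1) / 2 = t := by omega
    have h₃ : 2 * t / 2 = t := by omega
    have h₄ : (2 * t + 1) % 2 ≠ 0 := by omega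
    simp only [gammaGen, numAlpha, h₁, h₂, h₃, h₄, hΓ, if_false]
    push_cast; ring
  · have h₁ : (2 * t + 1 + 1 + 1) / 2 = t + 1 := by omega
    have h₂ : (2 * t + 1 + 1) / 2 = t + 1 := by omega
    have h₃ : (2 * t + 1) / 2 = t := by omega
    have h₄ : (2 * t + 1 + 1) % 2 = 0 := by omega
    simp only [gammaGen, numAlpha, h₁, h₂, h₃, h₄, Nat.factorial_succ, if_true]
    push_cast; ring

lemma gammaGen_add_half_eq_prod {α : ℝ} (hα : -1 < α) (m : ℕ) :
    gammaGen (α + 1 / 2) m = ∏ j ∈ Finset.range m, numAlpha α (j + 1) := by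
  induction m with
  | zero =>
    have := (Real.Gamma_pos_of_pos (by linarith : 0 < α + 1 / 2 + 1 / 2)).ne'
    simp_all [gammaGen]
  | succ m ih => rw [gammaGen_add_half_succ hα, ih, Finset.prod_range_succ, mul_comm]

lemma gammaGen_pos {ν : ℝ} (hν : 0 < ν + 1 / 2) (m : ℕ) : 0 < gammaGen ν m := by
  unfold gammaGen
  have := Real.Gamma_pos_of_pos hν
  have hm : (0 : ℝ) ≤ ((m + 1) / 2 : ℕ) := Nat.cast_nonneg _
  have := Real.Gamma_pos_of_pos (by linarith : 0 < ν + (((m + 1) / 2 : ℕ) : ℝ) + 1 / 2)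
  positivity

lemma tendsto_qFactAlpha {α : ℝ} (hα : -1 < α) (m : ℕ) :
    Tendsto (fun q => qFactAlpha q α m) (𝓝[≠] 1) (𝓝 (gammaGen (α + 1 / 2) m)) := by
  rw [gammaGen_add_half_eq_prod hα]
  exact tendsto_finsetProd _ fun j _ => tendsto_qNumAlpha α (j + 1)

lemma HGen_div_two_pow (ν : ℝ) (n : ℕ) (x : ℝ) :
    HGen ν n x / 2 ^ n = ∑ k ∈ Finset.range (n / 2 + 1),
      (-1) ^ k * x ^ (n - 2 * k) * n.factorial /
        (2 ^ (2 * k) * k.factorial * gammaGen ν (n - 2 * k)) := by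
  rw [HGen, Finset.mul_sum, Finset.sum_div]
  refine Finset.sum_congr rfl fun k hk => ?_
  have hn : n = (n - 2 * k) + 2 * k := by have := Finset.mem_range.mp hk; omega
  rw [mul_pow, hn, pow_add, Nat.add_sub_cancel]
  field_simp

lemma hTilde_sqrt_mul_div {q α : ℝ} (hq : q ∈ Set.Ioo 0 1) (hα : -1 < α) (n : ℕ) (x : ℝ) :
    hTilde q α n (√(1 - q ^ 2) * x) / (1 - q ^ 2) ^ ((n : ℝ) / 2) =
      ∑ k ∈ Finset.range (n / 2 + 1),
        (-1) ^ k * q ^ ((k * (2 * k + 1) : ℤ) - (2 * n * k : ℤ)) * x ^ (n - 2 * k) *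
          qFactorial q n /
            ((1 + q) ^ (2 * k) * qFactorial (q ^ 2) k * qFactAlpha q α (n - 2 * k)) := by
  have hFα (m : ℕ) : qFactAlpha q α m ≠ 0 := (qFactAlpha_pos hq hα m).ne'
  obtain ⟨hq₀, hq₁⟩ := hq
  have hs : √(1 - q ^ 2) ^ 2 = (1 - q) * (1 + q) := by
    rw [Real.sq_sqrt (by nlinarith)]; ring
  have hs₀ : 0 < √(1 - q ^ 2) := Real.sqrt_pos.mpr (by nlinarith)
  rw [Real.rpow_div_two_eq_sqrt _ (by nlinarith), Real.rpow_natCast, hTilde, Finset.mul_sum,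
    Finset.sum_div]
  generalize √(1 - q ^ 2) = s at hs hs₀ ⊢
  refine Finset.sum_congr rfl fun k hk => ?_
  obtain ⟨m, hm⟩ : ∃ m, n = m + 2 * k := ⟨n - 2 * k, by have := Finset.mem_range.mp hk; omega⟩
  have hsn : s ^ n = s ^ m * ((1 - q) * (1 + q)) ^ k := by
    rw [hm, pow_add, pow_mul, hs]
  have hF : qFactorial (q ^ 2) k ≠ 0 := (qFactorial_pos (by positivity) k).ne'
  have hq₁' : 1 - q ≠ 0 := by linarith
  rw [hsn, show n - 2 * k = m by omega, qPoch_self_eq, qPoch_self_eq, qPochAlpha, mul_pow,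
    show 1 - q ^ 2 = (1 - q) * (1 + q) by ring, mul_pow, hm]
  field_simp [hFα m]
  ring

lemma tendsto_hTilde_term {α : ℝ} (hα : -1 < α) (n k : ℕ) (x : ℝ) :
    Tendsto (fun q : ℝ => (-1) ^ k * q ^ ((k * (2 * k + 1) : ℤ) - (2 * n * k : ℤ)) *
        x ^ (n - 2 * k) * qFactorial q n /
          ((1 + q) ^ (2 * k) * qFactorial (q ^ 2) k * qFactAlpha q α (n - 2 * k)))
      (𝓝[≠] 1)
      (𝓝 ((-1) ^ k * x ^ (n - 2 * k) * n.factorial /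
        (2 ^ (2 * k) * k.factorial * gammaGen (α + 1 / 2) (n - 2 * k)))) := by
  have hnum : ContinuousAt (fun q : ℝ => (-1) ^ k *
      q ^ ((k * (2 * k + 1) : ℤ) - (2 * n * k : ℤ)) * x ^ (n - 2 * k) * qFactorial q n) 1 :=
    ((continuousAt_const.mul (continuousAt_zpow₀ _ _ (Or.inl one_ne_zero))).mul
      continuousAt_const).mul (continuous_qFactorial n).continuousAt
  have hden : Continuous fun q : ℝ => (1 + q) ^ (2 * k) * qFactorial (q ^ 2) k :=
    ((continuous_const.add continuous_id).pow _).mul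
      ((continuous_qFactorial k).comp (continuous_pow 2))
  have hlim := (hnum.tendsto.mono_left nhdsWithin_le_nhds).div
    ((hden.continuousAt.tendsto.mono_left nhdsWithin_le_nhds).mul
      (tendsto_qFactAlpha hα (n - 2 * k)))
    (by
      rw [one_pow, qFactorial_one]
      have := gammaGen_pos (by linarith : 0 < α + 1 / 2 + 1 / 2) (n - 2 * k)
      positivity)
  norm_num [qFactorial_one] at hlim
  exact hlim

/-- limit of the generalized discrete q-Hermite II polynomials to the
generalized Hermite polynomials. -/
theorem stmt_14 (α : ℝ) (hα : -1 < α) (n : ℕ) (x : ℝ) :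
    Tendsto (fun q : ℝ =>
        hTilde q α n (Real.sqrt (1 - q ^ 2) * x) / (1 - q ^ 2) ^ ((n : ℝ) / 2))
      (nhdsWithin 1 (Set.Ioo 0 1))
      (nhds (HGen (α + 1 / 2) n x / 2 ^ n)) := by
  have hfilter : 𝓝[Set.Ioo 0 1] (1 : ℝ) ≤ 𝓝[≠] 1 := nhdsWithin_mono _ fun q hq => hq.2.ne
  rw [HGen_div_two_pow]
  refine Tendsto.congr' (eventually_nhdsWithin_of_forall fun q hq =>
    (hTilde_sqrt_mul_div hq hα n x).symm) ?_
  exact tendsto_finsetSum _ fun k _ => (tendsto_hTilde_term hα n k x).mono_left hfilter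
end
end
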